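/- The ℚ-linear map from ℋ^{++} ⊗_ℚ ℚ[X,Y] to ℋ sending h ⊗ X^i Y^j to h * a^{*i} * b^{*j} (where a^{*i} and b^{*j} denote shuffle powers of the one-letter words a and b) is a vector-space isomorphism; equivalently, ℋ is the direct sum over i,j ≥ 0 of the subspaces ℋ^{++} * a^{*i} * b^{*j}. -/

import Mathlib

/-!
Every word factors uniquely as `b^j w a^i` with `w ∈ W⁺⁺`, and then `i` is its number of trailing
`a`s and `j` its number of leading `b`s. Order words by this pair, lexicographically. Since
`a^{*i} = i! a^i`, the product `w * a^{*i} * b^{*j}` has `i! j! b^j w a^i` as its only term of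
order `(i, j)`, and all its other terms are strictly smaller. Hence the linear map sending the
basis word `b^j w a^i` to `w * a^{*i} * b^{*j}` is triangular with nonzero diagonal for a
well-founded order, so it is an automorphism of `ℋ`; it carries the splitting of `ℋ` by the pair
`(i, j)` onto the splitting into the subspaces `ℋ⁺⁺ * a^{*i} * b^{*j}`.
-/

inductive Letter | a | b
deriving DecidableEq

abbrev Word := List Letter

/-- The algebra `ℋ`: formal `ℚ`-linear combinations of words. -/
abbrev H := Word →₀ ℚ

/-- The list of shuffles of two words (with multiplicity). -/
def shuffleList : Word → Word → List Word
  | [], v => [v]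
  | u, [] => [u]
  | x :: u, y :: v =>
      ((shuffleList u (y :: v)).map fun t => x :: t) ++
      ((shuffleList (x :: u) v).map fun t => y :: t)
termination_by u v => u.length + v.length
decreasing_by all_goals simp

/-- The shuffle product `u * v` of two words, as an element of `ℋ`. -/
noncomputable def shW (u v : Word) : H :=
  ((shuffleList u v).map fun t => Finsupp.single t (1 : ℚ)).sum

/-- The shuffle product of a word with an element of `ℋ`, extended linearly. -/
noncomputable def shWH (u : Word) (g : H) : H := g.sum fun v cv => cv • shW u v

/-- Concatenation of a word with an element of `ℋ`, extended linearly. -/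
noncomputable def concatWH (u : Word) (g : H) : H :=
  g.sum fun v c => Finsupp.single (u ++ v) c

/-- The list of all words of length `m`. -/
def wordsOfLength : ℕ → List Word
  | 0 => [[]]
  | n + 1 =>
      ((wordsOfLength n).map fun t => Letter.a :: t) ++
      ((wordsOfLength n).map fun t => Letter.b :: t)

/-- `(a+b)^m`, the `m`-fold concatenation power of `a+b` expanded multilinearly:
the sum of all words of length `m`. -/
noncomputable def abPow (m : ℕ) : H :=
  ((wordsOfLength m).map fun t => Finsupp.single t (1 : ℚ)).sum

/-- `(b-a)^m`, the `m`-fold concatenation power of `b-a` expanded multilinearly: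
the signed sum of all words of length `m`. -/
noncomputable def bmaPow (m : ℕ) : H :=
  ((wordsOfLength m).map fun t =>
    Finsupp.single t ((-1 : ℚ) ^ t.count Letter.a)).sum

/-- `W⁺⁺` : words not beginning with `b` and not ending with `a`. -/
def WPlusPlus (w : Word) : Prop := w.head? ≠ some Letter.b ∧ w.getLast? ≠ some Letter.a

/-- The shuffle product on `ℋ`, extended bilinearly from words. -/
noncomputable def shH (f g : H) : H :=
  f.sum fun u cu => g.sum fun v cv => (cu * cv) • shW u v

/-- `h^{*k}` : the `k`-fold shuffle power of `h ∈ ℋ`. -/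
noncomputable def shPow (h : H) : ℕ → H
  | 0 => Finsupp.single [] 1
  | n + 1 => shH (shPow h n) h

/-- The subspace `ℋ⁺⁺ * a^{*i} * b^{*j}` of `ℋ`: the span of the shuffle products of
the basis words of `ℋ⁺⁺` with the shuffle powers `a^{*i}` and `b^{*j}`. -/
noncomputable def SHab (p : ℕ × ℕ) : Submodule ℚ H :=
  Submodule.span ℚ
    {x : H | ∃ w : Word, WPlusPlus w ∧
      x = shH (shH (Finsupp.single w 1) (shPow (Finsupp.single [Letter.a] 1) p.1))
            (shPow (Finsupp.single [Letter.b] 1) p.2)}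

namespace Finsupp

variable {α β K : Type*} [DivisionRing K] [LinearOrder β] {κ : α → β} {v : α → α →₀ K}

theorem linearCombination_apply_of_triangular
    (lower : ∀ a u, v a u ≠ 0 → u ≠ a → κ u < κ a) {x : α →₀ K} {a : α}
    (hmax : ∀ u ∈ x.support, κ u ≤ κ a) :
    linearCombination K v x a = x a * v a a := by
  classical
  rw [linearCombination_apply, sum_apply]
  refine (Finset.sum_subset (Finset.subset_insert a x.support) ?_).trans
    (Finset.sum_eq_single_of_mem a (Finset.mem_insert_self a _) fun u hu hua => ?_)
  · intro u _ hu
    simp [notMem_support_iff.mp hu]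
  · by_contra h
    have hu : u ∈ x.support := (Finset.mem_insert.mp hu).resolve_left hua
    exact (hmax u hu).not_gt (lower u a (right_ne_zero_of_mul h) (Ne.symm hua))

theorem linearCombination_injective_of_triangular (diag : ∀ a, v a a ≠ 0)
    (lower : ∀ a u, v a u ≠ 0 → u ≠ a → κ u < κ a) :
    Function.Injective (linearCombination K v) := by
  rw [← LinearMap.ker_eq_bot, Submodule.eq_bot_iff]
  intro x hx
  by_contra hx0
  obtain ⟨a, ha, hmax⟩ := x.support.exists_max_image κ (support_nonempty_iff.mpr hx0)
  have := linearCombination_apply_of_triangular lower hmax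
  rw [LinearMap.mem_ker.mp hx, zero_apply] at this
  exact mul_ne_zero (mem_support_iff.mp ha) (diag a) this.symm

theorem linearCombination_surjective_of_triangular [WellFoundedLT β] (diag : ∀ a, v a a ≠ 0)
    (lower : ∀ a u, v a u ≠ 0 → u ≠ a → κ u < κ a) :
    Function.Surjective (linearCombination K v) := by
  set T := linearCombination K v
  have hsingle (a : α) : single a 1 ∈ LinearMap.range T := by
    induction h : κ a using WellFoundedLT.induction generalizing a with
    | ind b ih =>
      subst h
      have hrest : v a - v a a • single a 1 ∈ supported K K {u | κ u < κ a} := by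
        intro u hu
        by_cases hua : u = a
        · simp [hua] at hu
        · exact lower a u (by simpa [single_eq_of_ne hua] using hu) hua
      rw [supported_eq_span_single] at hrest
      have hva : v a ∈ LinearMap.range T := ⟨single a 1, by simp [T]⟩
      have := Submodule.smul_mem _ (v a a)⁻¹ (Submodule.sub_mem _ hva
        (Submodule.span_le.mpr (by rintro _ ⟨u, hu, rfl⟩; exact ih _ hu u rfl) hrest))
      rwa [sub_sub_cancel, smul_smul, inv_mul_cancel₀ (diag a), one_smul] at this
  rw [← LinearMap.range_eq_top, eq_top_iff, ← supported_univ, supported_eq_span_single,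
    Submodule.span_le]
  rintro _ ⟨a, -, rfl⟩
  exact hsingle a

theorem isInternal_supported_fiber {ι : Type*} [DecidableEq ι] (f : α → ι) :
    DirectSum.IsInternal fun i => supported K K (f ⁻¹' {i}) := by
  rw [DirectSum.isInternal_submodule_iff_iSupIndep_and_iSup_eq_top]
  refine ⟨fun i => ?_, ?_⟩
  · refine Disjoint.mono_right (iSup₂_le fun j hj =>
      supported_mono (Set.subset_iUnion₂ (s := fun j (_ : j ≠ i) => f ⁻¹' {j}) j hj))
      (disjoint_supported_supported ?_)
    rw [Set.disjoint_left]
    intro u hu hu'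
    simp_all
  · rw [← supported_iUnion, ← Set.preimage_iUnion, Set.iUnion_of_singleton, Set.preimage_univ,
      supported_univ]

end Finsupp

theorem DirectSum.IsInternal.map_of_bijective {R M N ι : Type*} [Ring R] [AddCommGroup M]
    [Module R M] [AddCommGroup N] [Module R N] [DecidableEq ι] {A : ι → Submodule R M}
    (h : DirectSum.IsInternal A) {f : M →ₗ[R] N} (hf : Function.Bijective f) :
    DirectSum.IsInternal fun i => (A i).map f := by
  rw [DirectSum.isInternal_submodule_iff_iSupIndep_and_iSup_eq_top] at h ⊢
  refine ⟨h.1.map_orderIso (Submodule.orderIsoMapComapOfBijective f hf), ?_⟩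
  rw [← Submodule.map_iSup, h.2, Submodule.map_top, LinearMap.range_eq_top.mpr hf.2]

def trailingA : Word → ℕ
  | [] => 0
  | x :: t => if x = .a ∧ trailingA t = t.length then t.length + 1 else trailingA t

def leadingB : Word → ℕ
  | .b :: t => leadingB t + 1
  | _ => 0

@[simp] lemma trailingA_nil : trailingA [] = 0 := rfl

lemma trailingA_cons (x : Letter) (t : Word) : trailingA (x :: t) =
    if x = .a ∧ trailingA t = t.length then t.length + 1 else trailingA t := rfl

@[simp] lemma trailingA_cons_b (t : Word) : trailingA (.b :: t) = trailingA t := by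
  simp [trailingA_cons]

lemma trailingA_le_length (t : Word) : trailingA t ≤ t.length := by
  induction t with
  | nil => simp
  | cons x t ih => rw [trailingA_cons]; split <;> simp; omega

lemma trailingA_eq_length_iff {t : Word} : trailingA t = t.length ↔ .b ∉ t := by
  induction t with
  | nil => simp
  | cons x t ih =>
    rw [trailingA_cons]
    split_ifs with h
    · obtain ⟨rfl, ht⟩ := h
      simp [ih.mp ht]
    · have := trailingA_le_length t
      cases x <;> simp_all <;> omega

lemma trailingA_cons_of_b_mem {x : Letter} {t : Word} (h : .b ∈ x :: t) :
    trailingA (x :: t) = trailingA t := by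
  rw [trailingA_cons, if_neg]
  rintro ⟨rfl, ht⟩
  simp [trailingA_eq_length_iff.mp ht] at h

lemma trailingA_le_trailingA_cons (x : Letter) (t : Word) : trailingA t ≤ trailingA (x :: t) := by
  have := trailingA_le_length t
  rw [trailingA_cons]; split <;> omega

lemma trailingA_eq_zero_of_cons {x : Letter} {t : Word} (h : trailingA (x :: t) = 0) :
    trailingA t = 0 :=
  Nat.eq_zero_of_le_zero (h ▸ trailingA_le_trailingA_cons x t)

lemma b_mem_of_trailingA_eq_zero {w : Word} (hw : trailingA w = 0) (hne : w ≠ []) : .b ∈ w := by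
  by_contra h
  exact hne (List.length_eq_zero_iff.mp (hw ▸ trailingA_eq_length_iff.mpr h).symm)

lemma trailingA_append_replicate (s : Word) (k : ℕ) :
    trailingA (s ++ List.replicate k .a) = trailingA s + k := by
  induction s with
  | nil =>
    simpa using (trailingA_eq_length_iff (t := List.replicate k .a)).mpr (by simp)
  | cons x s ih =>
    simp only [List.cons_append, trailingA_cons, ih, List.length_append, List.length_replicate]
    by_cases hs : trailingA s = s.length <;> cases x <;> simp [hs]; omega

lemma trailingA_append_b (s : Word) : trailingA (s ++ [.b]) = 0 := by
  induction s with
  | nil => rfl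
  | cons x s ih => rw [List.cons_append, trailingA_cons_of_b_mem (by simp), ih]

lemma trailingA_eq_zero_iff {s : Word} : trailingA s = 0 ↔ s.getLast? ≠ some .a := by
  induction s using List.reverseRecOn with
  | nil => simp
  | append_singleton s x =>
    cases x
    · simpa using (trailingA_append_replicate s 1).trans_ne (by omega)
    · simpa using trailingA_append_b s

lemma trailingA_replicate_b (j : ℕ) : trailingA (List.replicate j .b) = 0 := by
  induction j <;> simp [List.replicate_succ, *]

@[simp] lemma leadingB_nil : leadingB [] = 0 := rfl
@[simp] lemma leadingB_cons_a (t : Word) : leadingB (.a :: t) = 0 := rfl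
@[simp] lemma leadingB_cons_b (t : Word) : leadingB (.b :: t) = leadingB t + 1 := rfl

lemma leadingB_eq_zero_iff {s : Word} : leadingB s = 0 ↔ s.head? ≠ some .b := by
  rcases s with _ | ⟨_ | _, t⟩ <;> simp

lemma leadingB_replicate_append (j : ℕ) (s : Word) :
    leadingB (List.replicate j .b ++ s) = j + leadingB s := by
  induction j with
  | zero => simp
  | succ j ih => simp [List.replicate_succ, ih]; omega

def sandwich (w : Word) (i j : ℕ) : Word := List.replicate j .b ++ (w ++ List.replicate i .a)

lemma WPlusPlus.trailingA_eq_zero {w : Word} (hw : WPlusPlus w) : trailingA w = 0 :=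
  trailingA_eq_zero_iff.mpr hw.2

lemma WPlusPlus.leadingB_eq_zero {w : Word} (hw : WPlusPlus w) : leadingB w = 0 :=
  leadingB_eq_zero_iff.mpr hw.1

section Sandwich

variable {w : Word} (i j : ℕ)

lemma trailingA_sandwich (hw : WPlusPlus w) : trailingA (sandwich w i j) = i := by
  have : trailingA (List.replicate j .b ++ w) = 0 := by
    rw [trailingA_eq_zero_iff, List.getLast?_append]
    have := hw.2
    revert this
    rcases w.getLast? with _ | _ | _ <;> simp [List.getLast?_replicate]
  rw [sandwich, ← List.append_assoc, trailingA_append_replicate, this, zero_add]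

lemma leadingB_append_replicate_a (hw : leadingB w = 0) :
    leadingB (w ++ List.replicate i .a) = 0 := by
  rcases w with _ | ⟨_ | _, w⟩
  · cases i <;> simp [List.replicate_succ]
  · rfl
  · simp at hw

lemma leadingB_sandwich (hw : WPlusPlus w) : leadingB (sandwich w i j) = j := by
  rw [sandwich, leadingB_replicate_append, leadingB_append_replicate_a i hw.leadingB_eq_zero,
    add_zero]

lemma sandwich_left_injective : Function.Injective fun w => sandwich w i j :=
  fun _ _ h => List.append_cancel_right (List.append_cancel_left h)

end Sandwich

lemma exists_sandwich (u : Word) : ∃ w i j, WPlusPlus w ∧ sandwich w i j = u := by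
  induction h : u.length using Nat.strong_induction_on generalizing u with
  | _ n ih =>
  by_cases hb : u.head? = some .b
  · obtain ⟨t, rfl⟩ := List.head?_eq_some_iff.mp hb
    obtain ⟨w, i, j, hw, rfl⟩ := ih t.length (by simp [← h]) t rfl
    exact ⟨w, i, j + 1, hw, by simp [sandwich, List.replicate_succ]⟩
  by_cases ha : u.getLast? = some .a
  · obtain ⟨t, rfl⟩ := List.getLast?_eq_some_iff.mp ha
    obtain ⟨w, i, j, hw, rfl⟩ := ih t.length (by simp [← h]) t rfl
    exact ⟨w, i + 1, j, hw, by simp [sandwich, List.replicate_succ']⟩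
  exact ⟨u, 0, 0, ⟨hb, ha⟩, by simp [sandwich]⟩

noncomputable def sandwichCore (u : Word) : Word := (exists_sandwich u).choose

lemma sandwichCore_spec (u : Word) :
    WPlusPlus (sandwichCore u) ∧ sandwich (sandwichCore u) (trailingA u) (leadingB u) = u := by
  obtain ⟨i, j, hw, hu⟩ := (exists_sandwich u).choose_spec
  refine ⟨hw, ?_⟩
  have hi := trailingA_sandwich i j hw
  have hj := leadingB_sandwich i j hw
  rw [hu] at hi hj
  rwa [hi, hj]

lemma sandwichCore_sandwich {w : Word} (hw : WPlusPlus w) (i j : ℕ) :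
    sandwichCore (sandwich w i j) = w := by
  have := (sandwichCore_spec (sandwich w i j)).2
  rw [trailingA_sandwich i j hw, leadingB_sandwich i j hw] at this
  exact sandwich_left_injective i j this

@[simp] lemma shuffleList_nil_left (v : Word) : shuffleList [] v = [v] := by
  rw [shuffleList]

@[simp] lemma shuffleList_nil_right (u : Word) : shuffleList u [] = [u] := by
  cases u <;> simp [shuffleList]

lemma shuffleList_cons_cons (x y : Letter) (u v : Word) :
    shuffleList (x :: u) (y :: v) =
      (shuffleList u (y :: v)).map (x :: ·) ++ (shuffleList (x :: u) v).map (y :: ·) := by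
  rw [shuffleList]

lemma shuffleList_cons_replicate_succ (x c : Letter) (u : Word) (n : ℕ) :
    shuffleList (x :: u) (List.replicate (n + 1) c) =
      (shuffleList u (List.replicate (n + 1) c)).map (x :: ·) ++
        (shuffleList (x :: u) (List.replicate n c)).map (c :: ·) := by
  rw [List.replicate_succ, shuffleList_cons_cons]

lemma perm_of_mem_shuffleList : ∀ {u v t : Word}, t ∈ shuffleList u v → t.Perm (u ++ v)
  | [], v, t, h => by simp_all
  | x :: u, [], t, h => by simp_all
  | x :: u, y :: v, t, h => by
    rw [shuffleList_cons_cons] at h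
    rcases List.mem_append.mp h with h | h <;> obtain ⟨t, ht, rfl⟩ := List.mem_map.mp h
    · exact (perm_of_mem_shuffleList ht).cons x
    · exact ((perm_of_mem_shuffleList ht).cons y).trans List.perm_middle.symm
termination_by u v => u.length + v.length

lemma subset_of_mem_shuffleList_left {u v t : Word} (h : t ∈ shuffleList u v) : u ⊆ t :=
  fun _ hc => (perm_of_mem_shuffleList h).symm.subset (List.mem_append_left v hc)

lemma subset_of_mem_shuffleList_right {u v t : Word} (h : t ∈ shuffleList u v) : v ⊆ t :=
  fun _ hc => (perm_of_mem_shuffleList h).symm.subset (List.mem_append_right u hc)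

lemma trailingA_lt_or_eq_of_mem_shuffleList_replicate_a {w : Word} (hw : trailingA w = 0)
    {i : ℕ} {t : Word} (ht : t ∈ shuffleList w (List.replicate i .a)) :
    trailingA t < i ∨ t = w ++ List.replicate i .a := by
  induction w generalizing i t with
  | nil => simp_all
  | cons x w ih =>
    have hb : .b ∈ x :: w := b_mem_of_trailingA_eq_zero hw (List.cons_ne_nil x w)
    induction i generalizing t with
    | zero => simp_all
    | succ i ihi =>
      rw [shuffleList_cons_replicate_succ] at ht
      rcases List.mem_append.mp ht with h | h <;> obtain ⟨s, hs, rfl⟩ := List.mem_map.mp h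
      · rw [trailingA_cons_of_b_mem
          (List.cons_subset_cons x (subset_of_mem_shuffleList_left hs) hb)]
        simpa using ih (trailingA_eq_zero_of_cons hw) hs
      · rw [trailingA_cons_of_b_mem (List.mem_cons_of_mem _ (subset_of_mem_shuffleList_left hs hb))]
        rcases ihi hs with h | rfl
        · exact .inl (by omega)
        · exact .inl (by rw [trailingA_append_replicate, hw]; omega)

lemma count_shuffleList_replicate_a {w : Word} (hw : trailingA w = 0) (i : ℕ) :
    (shuffleList w (List.replicate i .a)).count (w ++ List.replicate i .a) = 1 := by
  induction w generalizing i with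
  | nil => simp
  | cons x w ih =>
    cases i with
    | zero => simp
    | succ i =>
      have hw' := trailingA_eq_zero_of_cons hw
      rw [shuffleList_cons_replicate_succ, List.count_append, List.cons_append,
        List.count_map_of_injective _ _ List.cons_injective, ih hw', add_eq_left,
        List.count_eq_zero]
      intro hmem
      obtain ⟨t, ht, heq⟩ := List.mem_map.mp hmem
      obtain ⟨-, rfl⟩ := List.cons_eq_cons.mp heq
      have hlen : trailingA (w ++ List.replicate (i + 1) .a) = i + 1 := by
        rw [trailingA_append_replicate, hw', zero_add]
      rcases trailingA_lt_or_eq_of_mem_shuffleList_replicate_a hw ht with h | h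
      · omega
      · rw [h, trailingA_append_replicate, hw] at hlen
        omega

lemma leadingB_lt_or_eq_of_mem_shuffleList_replicate_b {t : Word} (ht : leadingB t = 0)
    {j : ℕ} {v : Word} (hv : v ∈ shuffleList t (List.replicate j .b)) :
    leadingB v < j ∨ v = List.replicate j .b ++ t := by
  induction j generalizing v with
  | zero => simp_all
  | succ j ih =>
    rcases t with _ | ⟨_ | _, t⟩
    · simp_all
    · rw [shuffleList_cons_replicate_succ] at hv
      rcases List.mem_append.mp hv with h | h <;> obtain ⟨v, hmem, rfl⟩ := List.mem_map.mp h
      · simp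
      · simpa [List.replicate_succ] using ih hmem
    · simp at ht

lemma count_shuffleList_replicate_b {t : Word} (ht : leadingB t = 0) (j : ℕ) :
    (shuffleList t (List.replicate j .b)).count (List.replicate j .b ++ t) = 1 := by
  induction j with
  | zero => simp
  | succ j ih =>
    rcases t with _ | ⟨_ | _, t⟩
    · simp
    · rw [shuffleList_cons_replicate_succ, List.count_append, List.replicate_succ,
        List.cons_append, List.count_map_of_injective _ _ List.cons_injective, ih,
        add_eq_right, List.count_eq_zero]
      simp
    · simp at ht

lemma trailingA_le_of_mem_shuffleList_replicate_b {t : Word} {j : ℕ} {v : Word}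
    (hv : v ∈ shuffleList t (List.replicate j .b)) : trailingA v ≤ trailingA t := by
  induction t generalizing j v with
  | nil => simp_all [trailingA_replicate_b]
  | cons x t ih =>
    induction j generalizing v with
    | zero => simp_all
    | succ j ihj =>
      rw [shuffleList_cons_replicate_succ] at hv
      rcases List.mem_append.mp hv with h | h <;> obtain ⟨v, hmem, rfl⟩ := List.mem_map.mp h
      · have hb : .b ∈ v := subset_of_mem_shuffleList_right hmem (by simp)
        rw [trailingA_cons_of_b_mem (List.mem_cons_of_mem x hb)]
        exact (ih hmem).trans (trailingA_le_trailingA_cons x t)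
      · simpa using ihj hmem

section ShuffleAlgebra

open Finsupp Nat

lemma shW_apply (u v t : Word) : shW u v t = (shuffleList u v).count t := by
  rw [shW]
  induction shuffleList u v with
  | nil => simp
  | cons s L ih => by_cases h : s = t <;> simp [ih, h]; ring

lemma mem_support_shW {u v t : Word} : t ∈ (shW u v).support ↔ t ∈ shuffleList u v := by
  simp [shW_apply, List.count_eq_zero]

lemma shH_single_single (u v : Word) (c d : ℚ) :
    shH (single u c) (single v d) = (c * d) • shW u v := by
  rw [shH, sum_single_index (by simp), sum_single_index (by simp)]

lemma shH_smul_left (c : ℚ) (f g : H) : shH (c • f) g = c • shH f g := by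
  rw [shH, shH, sum_smul_index (by simp)]
  simp only [smul_sum, smul_smul, mul_assoc]

lemma shH_smul_right (c : ℚ) (f g : H) : shH f (c • g) = c • shH f g := by
  rw [shH, shH, smul_sum]
  refine sum_congr fun u _ => ?_
  rw [sum_smul_index (by simp), smul_sum]
  simp only [smul_smul, mul_left_comm]

lemma shH_single_one_apply (f : H) (v u : Word) :
    shH f (single v 1) u = f.sum fun s c => c * (shuffleList s v).count u := by
  rw [shH, Finsupp.sum_apply]
  refine sum_congr fun s _ => ?_
  rw [sum_single_index (by simp), Finsupp.smul_apply, mul_one, smul_eq_mul, shW_apply]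

lemma shuffleList_replicate_singleton (c : Letter) :
    ∀ n, shuffleList (List.replicate n c) [c] = List.replicate (n + 1) (List.replicate (n + 1) c)
  | 0 => by simp
  | n + 1 => by
    rw [List.replicate_succ, shuffleList_cons_cons, ← List.replicate_succ,
      shuffleList_replicate_singleton c n, shuffleList_nil_right, List.map_replicate,
      List.map_singleton, ← List.replicate_succ, ← List.replicate_succ']

lemma shPow_single_singleton (c : Letter) (n : ℕ) :
    shPow (single [c] 1) n = (n ! : ℚ) • single (List.replicate n c) 1 := by
  induction n with
  | zero => simp [shPow]
  | succ n ih =>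
    rw [shPow, ih, shH_smul_left, shH_single_single, shW, shuffleList_replicate_singleton,
      List.map_replicate, List.sum_replicate, ← Nat.cast_smul_eq_nsmul ℚ, smul_smul, smul_smul]
    push_cast [factorial_succ]
    ring_nf

end ShuffleAlgebra

noncomputable def shuffleGen (w : Word) (i j : ℕ) : H :=
  shH (shH (Finsupp.single w 1) (shPow (Finsupp.single [.a] 1) i))
    (shPow (Finsupp.single [.b] 1) j)

section LeadingTerm

open Finsupp Nat

lemma shuffleGen_eq_smul (w : Word) (i j : ℕ) :
    shuffleGen w i j = (i ! * j ! : ℚ) •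
      shH (shW w (List.replicate i .a)) (single (List.replicate j .b) 1) := by
  rw [shuffleGen, shPow_single_singleton, shPow_single_singleton, shH_smul_right, shH_smul_right,
    shH_smul_left, shH_single_single, one_mul, one_smul, smul_smul, mul_comm (j ! : ℚ)]

variable {w : Word}

lemma lt_or_eq_sandwich_of_mem_shuffleList (hw : WPlusPlus w) {i j : ℕ} {s u : Word}
    (hs : s ∈ shuffleList w (List.replicate i .a)) (hu : u ∈ shuffleList s (List.replicate j .b)) :
    toLex (trailingA u, leadingB u) < toLex (i, j) ∨
      s = w ++ List.replicate i .a ∧ u = sandwich w i j := by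
  have hus := trailingA_le_of_mem_shuffleList_replicate_b hu
  rw [Prod.Lex.toLex_lt_toLex]
  rcases trailingA_lt_or_eq_of_mem_shuffleList_replicate_a hw.trailingA_eq_zero hs with hlt | rfl
  · exact .inl (.inl (hus.trans_lt hlt))
  have hsi : trailingA (w ++ List.replicate i .a) = i := by
    rw [trailingA_append_replicate, hw.trailingA_eq_zero, zero_add]
  rcases leadingB_lt_or_eq_of_mem_shuffleList_replicate_b
    (leadingB_append_replicate_a i hw.leadingB_eq_zero) hu with huj | rfl
  · omega
  · exact .inr ⟨rfl, rfl⟩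

lemma shuffleGen_apply_sandwich (hw : WPlusPlus w) (i j : ℕ) :
    shuffleGen w i j (sandwich w i j) = i ! * j ! := by
  rw [shuffleGen_eq_smul, Finsupp.smul_apply, shH_single_one_apply, smul_eq_mul, Finsupp.sum,
    Finset.sum_eq_single (w ++ List.replicate i .a)]
  · rw [shW_apply, count_shuffleList_replicate_a hw.trailingA_eq_zero, sandwich,
      count_shuffleList_replicate_b (leadingB_append_replicate_a i hw.leadingB_eq_zero)]
    simp
  · intro s hs hne
    rw [List.count_eq_zero_of_not_mem, Nat.cast_zero, mul_zero]
    intro hu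
    rcases lt_or_eq_sandwich_of_mem_shuffleList hw (mem_support_shW.mp hs) hu with h | h
    · rw [trailingA_sandwich i j hw, leadingB_sandwich i j hw] at h
      exact h.false
    · exact hne h.1
  · intro h
    rw [notMem_support_iff.mp h, zero_mul]

lemma lt_of_shuffleGen_apply_ne_zero (hw : WPlusPlus w) {i j : ℕ} {u : Word}
    (hu : shuffleGen w i j u ≠ 0) (hne : u ≠ sandwich w i j) :
    toLex (trailingA u, leadingB u) < toLex (i, j) := by
  rw [shuffleGen_eq_smul, Finsupp.smul_apply, shH_single_one_apply, smul_eq_mul] at hu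
  obtain ⟨s, hs, hsu⟩ := Finset.exists_ne_zero_of_sum_ne_zero (right_ne_zero_of_mul hu)
  have hu : u ∈ shuffleList s (List.replicate j .b) :=
    List.count_pos_iff.mp (Nat.pos_of_ne_zero (by simpa using right_ne_zero_of_mul hsu))
  exact (lt_or_eq_sandwich_of_mem_shuffleList hw (mem_support_shW.mp hs) hu).resolve_right
    fun h => hne h.2

end LeadingTerm

noncomputable def shuffleGenMap : H →ₗ[ℚ] H :=
  Finsupp.linearCombination ℚ fun u => shuffleGen (sandwichCore u) (trailingA u) (leadingB u)

lemma shuffleGenMap_bijective : Function.Bijective shuffleGenMap := by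
  have diag (u : Word) : shuffleGen (sandwichCore u) (trailingA u) (leadingB u) u ≠ 0 := by
    have := shuffleGen_apply_sandwich (sandwichCore_spec u).1 (trailingA u) (leadingB u)
    rw [(sandwichCore_spec u).2] at this
    rw [this]
    positivity
  have lower (a u : Word) (hu : shuffleGen (sandwichCore a) (trailingA a) (leadingB a) u ≠ 0)
      (hua : u ≠ a) : toLex (trailingA u, leadingB u) < toLex (trailingA a, leadingB a) :=
    lt_of_shuffleGen_apply_ne_zero (sandwichCore_spec a).1 hu (by rwa [(sandwichCore_spec a).2])
  exact ⟨Finsupp.linearCombination_injective_of_triangular diag lower,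
    Finsupp.linearCombination_surjective_of_triangular diag lower⟩

lemma SHab_eq_map (p : ℕ × ℕ) :
    SHab p = (Finsupp.supported ℚ ℚ ((fun u => (trailingA u, leadingB u)) ⁻¹' {p})).map
      shuffleGenMap := by
  rw [SHab, Finsupp.supported_eq_span_single, Submodule.map_span, Set.image_image]
  congr 1
  ext x
  simp only [shuffleGenMap, Finsupp.linearCombination_single, one_smul, Set.mem_image,
    Set.mem_preimage, Set.mem_singleton_iff, Set.mem_ofPred_eq, shuffleGen]
  constructor
  · rintro ⟨w, hw, rfl⟩
    refine ⟨sandwich w p.1 p.2, ?_, ?_⟩ <;>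
      simp only [trailingA_sandwich _ _ hw, leadingB_sandwich _ _ hw, sandwichCore_sandwich hw]
  · rintro ⟨u, rfl, rfl⟩
    exact ⟨sandwichCore u, (sandwichCore_spec u).1, rfl⟩

/-- `ℋ` is the direct sum over `i, j ≥ 0` of the subspaces `ℋ⁺⁺ * a^{*i} * b^{*j}`;
equivalently, the map `ℋ⁺⁺ ⊗ ℚ[X,Y] → ℋ`, `h ⊗ XⁱYʲ ↦ h * a^{*i} * b^{*j}`, is a
vector-space isomorphism. -/
theorem statement11 : DirectSum.IsInternal fun p : ℕ × ℕ => SHab p := by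
  rw [funext SHab_eq_map]
  exact (Finsupp.isInternal_supported_fiber (K := ℚ) fun u : Word =>
    (trailingA u, leadingB u)).map_of_bijective shuffleGenMap_bijective
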